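/- arXiv:2410.02738 — 2 statements merged into one kernel-verified Lean document; each statement's English description precedes it below -/
import Mathlib

section
/- For every complex number q with |q| < 1, the following identity holds: (1+q) · Σ_{n≥0} (−q^2; q^2)_n q^{2n+1} / (q; q^2)_{n+1} = (q^4; q^4)_∞/(q; q)_∞ − 1. -/
/-- The finite q-Pochhammer symbol `(a; q)_n = ∏_{j=0}^{n-1} (1 - a q^j)`. -/
noncomputable def qPoch (a q : ℂ) (n : ℕ) : ℂ := ∏ j ∈ Finset.range n, (1 - a * q ^ j)

/-- The infinite q-Pochhammer symbol `(a; q)_∞ = ∏_{j=0}^{∞} (1 - a q^j)`. -/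
noncomputable def qPochInf (a q : ℂ) : ℂ := ∏' j : ℕ, (1 - a * q ^ j)

/-!
Writing `B n = (-q²; q²)_n / (q; q²)_n`, the `n`-th summand times `1 + q` is `B (n+1) - B n`, so
the series telescopes to `(-q²; q²)_∞ / (q; q²)_∞ - 1`. Splitting `(q; q)_∞` into its even and odd
factors gives `(q; q)_∞ = (q; q²)_∞ (q²; q²)_∞`, and `(1 - x)(1 + x) = 1 - x²` gives
`(q²; q²)_∞ (-q²; q²)_∞ = (q⁴; q⁴)_∞`; dividing the two identities yields the right-hand side.
-/

open Filter Finset Asymptotics Topology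

lemma summable_mul_pow_of_tendsto {𝕜 : Type*} [NormedField 𝕜] [CompleteSpace 𝕜] {u : ℕ → 𝕜}
    {c p : 𝕜} (hu : Tendsto u atTop (𝓝 c)) (hp : ‖p‖ < 1) : Summable fun n => u n * p ^ n := by
  refine summable_of_isBigO_nat (summable_geometric_of_lt_one (norm_nonneg p) hp) ?_
  have hpow : (fun n : ℕ => p ^ n) =O[atTop] fun n => ‖p‖ ^ n := by
    simpa only [norm_pow] using (isBigO_refl (fun n : ℕ => p ^ n) atTop).norm_right
  simpa only [one_mul] using (hu.isBigO_one ℝ).mul hpow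

section QPochhammer

variable {a b p q : ℂ}

lemma one_sub_mul_pow_ne_zero (ha : ‖a‖ < 1) (hq : ‖q‖ ≤ 1) (j : ℕ) : 1 - a * q ^ j ≠ 0 := by
  refine sub_ne_zero.2 fun h => ?_
  have : ‖a * q ^ j‖ < 1 := by
    rw [norm_mul, norm_pow]
    exact (mul_le_of_le_one_right (norm_nonneg a) (pow_le_one₀ (norm_nonneg q) hq)).trans_lt ha
  rw [← h, norm_one] at this
  exact this.false

lemma summable_norm_neg_mul_pow (a : ℂ) (hq : ‖q‖ < 1) :
    Summable fun j : ℕ => ‖-(a * q ^ j)‖ := by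
  simpa only [norm_neg, norm_mul, norm_pow] using
    (summable_geometric_of_lt_one (norm_nonneg q) hq).mul_left ‖a‖

lemma multipliable_one_sub_mul_pow (a : ℂ) (hq : ‖q‖ < 1) :
    Multipliable fun j : ℕ => 1 - a * q ^ j := by
  simpa only [← sub_eq_add_neg] using multipliable_one_add_of_summable
    (summable_norm_neg_mul_pow a hq)

lemma qPochInf_ne_zero (ha : ∀ j, 1 - a * q ^ j ≠ 0) (hq : ‖q‖ < 1) : qPochInf a q ≠ 0 := by
  simpa only [qPochInf, ← sub_eq_add_neg] using tprod_one_add_ne_zero_of_summable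
    (by simpa only [← sub_eq_add_neg] using ha) (summable_norm_neg_mul_pow a hq)

lemma tendsto_qPoch_qPochInf (a : ℂ) (hq : ‖q‖ < 1) :
    Tendsto (qPoch a q) atTop (𝓝 (qPochInf a q)) :=
  (multipliable_one_sub_mul_pow a hq).hasProd.tendsto_prod_nat

lemma qPoch_succ (a q : ℂ) (n : ℕ) : qPoch a q (n + 1) = qPoch a q n * (1 - a * q ^ n) :=
  prod_range_succ _ n

lemma qPoch_ne_zero (ha : ∀ j, 1 - a * q ^ j ≠ 0) (n : ℕ) : qPoch a q n ≠ 0 :=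
  prod_ne_zero_iff.2 fun j _ => ha j

lemma qPochInf_eq_mul_qPochInf_sq (a : ℂ) (hq : ‖q‖ < 1) :
    qPochInf a q = qPochInf a (q ^ 2) * qPochInf (a * q) (q ^ 2) := by
  have hq2 : ‖q ^ 2‖ < 1 := by rw [norm_pow]; exact pow_lt_one₀ (norm_nonneg q) hq two_ne_zero
  have heven (k : ℕ) : 1 - a * q ^ (2 * k) = 1 - a * (q ^ 2) ^ k := by rw [pow_mul]
  have hodd (k : ℕ) : 1 - a * q ^ (2 * k + 1) = 1 - a * q * (q ^ 2) ^ k := by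
    rw [pow_succ, pow_mul]; ring
  rw [qPochInf, qPochInf, qPochInf, ← tprod_even_mul_odd (f := fun j => 1 - a * q ^ j)
    ((multipliable_one_sub_mul_pow a hq2).congr fun k => (heven k).symm)
    ((multipliable_one_sub_mul_pow (a * q) hq2).congr fun k => (hodd k).symm)]
  simp only [heven, hodd]

lemma qPochInf_mul_qPochInf_neg (a : ℂ) (hq : ‖q‖ < 1) :
    qPochInf a q * qPochInf (-a) q = qPochInf (a ^ 2) (q ^ 2) := by
  rw [qPochInf, qPochInf, qPochInf, ← (multipliable_one_sub_mul_pow a hq).tprod_mul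
    (multipliable_one_sub_mul_pow (-a) hq)]
  exact tprod_congr fun k => by ring

lemma qPoch_div_qPoch_succ_sub (hb : ∀ j, 1 - b * p ^ j ≠ 0) (n : ℕ) :
    qPoch a p (n + 1) / qPoch b p (n + 1) - qPoch a p n / qPoch b p n =
      (b - a) * p ^ n * qPoch a p n / qPoch b p (n + 1) := by
  rw [qPoch_succ a, qPoch_succ b, ← mul_div_mul_right (qPoch a p n) _ (hb n), div_sub_div_same,
    ← mul_sub]
  ring

lemma hasSum_qPoch_div_qPoch_succ (hb : ∀ j, 1 - b * p ^ j ≠ 0) (hp : ‖p‖ < 1) :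
    HasSum (fun n => (b - a) * p ^ n * qPoch a p n / qPoch b p (n + 1))
      (qPochInf a p / qPochInf b p - 1) := by
  have hA := tendsto_qPoch_qPochInf a hp
  have hB := tendsto_qPoch_qPochInf b hp
  have hB0 := qPochInf_ne_zero hb hp
  have hsummable : Summable fun n => (b - a) * p ^ n * qPoch a p n / qPoch b p (n + 1) := by
    refine (summable_mul_pow_of_tendsto
      (((hA.div (hB.comp (tendsto_add_atTop_nat 1)) hB0).const_mul (b - a))) hp).congr fun n => ?_
    simp only [Pi.div_apply, Function.comp_apply]
    ring
  refine hsummable.hasSum_iff_tendsto_nat.2 ?_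
  have hpartial (N : ℕ) : ∑ n ∈ range N, (b - a) * p ^ n * qPoch a p n / qPoch b p (n + 1) =
      qPoch a p N / qPoch b p N - 1 := by
    simp only [← qPoch_div_qPoch_succ_sub hb]
    rw [sum_range_sub (fun n => qPoch a p n / qPoch b p n)]
    simp [qPoch]
  rw [funext hpartial]
  exact (hA.div hB hB0).sub_const 1

end QPochhammer

theorem stmt_1 (q : ℂ) (hq : ‖q‖ < 1) :
    (1 + q) * ∑' n : ℕ, qPoch (-q ^ 2) (q ^ 2) n * q ^ (2 * n + 1) / qPoch q (q ^ 2) (n + 1) =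
      qPochInf (q ^ 4) (q ^ 4) / qPochInf q q - 1 := by
  have hq2 : ‖q ^ 2‖ < 1 := by rw [norm_pow]; exact pow_lt_one₀ (norm_nonneg q) hq two_ne_zero
  have hsum := hasSum_qPoch_div_qPoch_succ (a := -q ^ 2)
    (one_sub_mul_pow_ne_zero hq hq2.le) hq2
  have hsquares : qPochInf (q ^ 2) (q ^ 2) * qPochInf (-q ^ 2) (q ^ 2) =
      qPochInf (q ^ 4) (q ^ 4) := by
    rw [qPochInf_mul_qPochInf_neg _ hq2, ← pow_mul]
  have hsplit : qPochInf q q = qPochInf q (q ^ 2) * qPochInf (q ^ 2) (q ^ 2) := by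
    rw [qPochInf_eq_mul_qPochInf_sq q hq, ← sq]
  rw [← tsum_mul_left, ← hsquares, hsplit, mul_comm (qPochInf q _),
    mul_div_mul_left _ _ (qPochInf_ne_zero (one_sub_mul_pow_ne_zero hq2 hq2.le) hq2),
    ← hsum.tsum_eq]
  refine tsum_congr fun n => ?_
  rw [show q ^ (2 * n + 1) = (q ^ 2) ^ n * q by rw [← pow_mul, pow_succ]]
  ring
end

section
/- For every complex number q with |q| < 1, the generating function identity Σ_{n≥0} DE3(n) q^n = Σ_{n≥0} (−q^2; q^2)_n q^{2n+1} / (q; q^2)_n holds (the constant term DE3(0) being 0). -/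
/-!
A partition counted by `DE3` with largest part `2m+1` is that part, once, together with a set of
distinct even parts from `{2, …, 2m}` and a multiset of odd parts from `{1, …, 2m-1}`. Recording,
for each `j < m`, whether `2j+2` occurs and how often `2j+1` occurs turns these partitions into
the tuples `Fin m → Bool × ℕ`, so their generating function is the product
`q^(2m+1) ∏_{j<m} (1 + q^(2j+2)) / (1 - q^(2j+1))`, the `m`-th term of the right-hand side.
Summing over `m` is legitimate because the product is bounded by `exp (2 / (1 - |q|)^2)`.
-/

/-- `DE1 n` is the number of partitions of `n` in which no even part is repeated
and the largest part is odd. -/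
noncomputable def DE1 (n : ℕ) : ℕ :=
  Nat.card {p : n.Partition //
    (∀ k ∈ p.parts, Even k → p.parts.count k = 1) ∧
    ∃ k ∈ p.parts, Odd k ∧ ∀ j ∈ p.parts, j ≤ k}

/-- `DE2 n` is the number of partitions of `n` in which no even part is repeated,
the largest part is odd and appears at least twice. -/
noncomputable def DE2 (n : ℕ) : ℕ :=
  Nat.card {p : n.Partition //
    (∀ k ∈ p.parts, Even k → p.parts.count k = 1) ∧
    ∃ k ∈ p.parts, Odd k ∧ 2 ≤ p.parts.count k ∧ ∀ j ∈ p.parts, j ≤ k}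

/-- `DE3 n` is the number of partitions of `n` in which no even part is repeated,
the largest part is odd and appears exactly once. -/
noncomputable def DE3 (n : ℕ) : ℕ :=
  Nat.card {p : n.Partition //
    (∀ k ∈ p.parts, Even k → p.parts.count k = 1) ∧
    ∃ k ∈ p.parts, Odd k ∧ p.parts.count k = 1 ∧ ∀ j ∈ p.parts, j ≤ k}

open Finset

section PiProduct

variable {R : Type*} [NormedCommRing R] {α : Type*}

theorem summable_norm_pi_prod {n : ℕ} (f : Fin n → α → R)
    (hf : ∀ j, Summable fun a => ‖f j a‖) :
    Summable fun g : Fin n → α => ‖∏ j, f j (g j)‖ := by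
  induction n with
  | zero => exact .of_finite
  | succ n ih =>
    refine (Fin.consEquiv fun _ => α).summable_iff.mp ?_
    simpa [Function.comp_def, Fin.prod_univ_succ] using
      (hf 0).mul_norm (ih (fun j => f j.succ) fun j => hf j.succ)

theorem tsum_pi_prod [CompleteSpace R] {n : ℕ} (f : Fin n → α → R)
    (hf : ∀ j, Summable fun a => ‖f j a‖) :
    ∑' g : Fin n → α, ∏ j, f j (g j) = ∏ j, ∑' a, f j a := by
  induction n with
  | zero => simp
  | succ n ih =>
    have htail := summable_norm_pi_prod (fun j => f j.succ) fun j => hf j.succ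
    rw [Fin.prod_univ_succ, ← ih _ fun j => hf j.succ,
      tsum_mul_tsum_of_summable_norm (hf 0) htail,
      ← (Fin.consEquiv fun _ => α).tsum_eq]
    simp [Fin.prod_univ_succ]

end PiProduct

def blockWeight (j : ℕ) (c : Bool × ℕ) : ℕ := (if c.1 then 2 * j + 2 else 0) + c.2 * (2 * j + 1)

def codeWeight (n : ℕ) (a : Fin n → Bool × ℕ) : ℕ := 2 * n + 1 + ∑ j : Fin n, blockWeight j (a j)

section Weights

variable {K : Type*} [NormedField K] {ξ : K}

theorem pow_blockWeight (j : ℕ) (c : Bool × ℕ) :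
    ξ ^ blockWeight j c = (if c.1 then ξ ^ (2 * j + 2) else 1) * (ξ ^ (2 * j + 1)) ^ c.2 := by
  rcases c with ⟨_ | _, m⟩ <;> simp [blockWeight, pow_add, pow_mul']

theorem hasSum_pow_blockWeight [CompleteSpace K] (hξ : ‖ξ‖ < 1) (j : ℕ) :
    HasSum (fun c : Bool × ℕ => ξ ^ blockWeight j c)
      ((1 + ξ ^ (2 * j + 2)) / (1 - ξ ^ (2 * j + 1))) := by
  have hr : ‖ξ ^ (2 * j + 1)‖ < 1 := by
    rw [norm_pow]; exact pow_lt_one₀ (norm_nonneg _) hξ (by omega)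
  have hflag : HasSum (fun b : Bool => if b then ξ ^ (2 * j + 2) else 1) (1 + ξ ^ (2 * j + 2)) := by
    convert hasSum_fintype fun b : Bool => if b then ξ ^ (2 * j + 2) else 1 using 1
    simp [add_comm]
  have hprod := hflag.mul (hasSum_geometric_of_norm_lt_one hr)
    (summable_mul_of_summable_norm (f := fun b : Bool => if b then ξ ^ (2 * j + 2) else 1)
      .of_finite (summable_norm_geometric_of_norm_lt_one hr))
  simpa only [pow_blockWeight, div_eq_mul_inv] using hprod

theorem summable_norm_pow_blockWeight (hξ : ‖ξ‖ < 1) (j : ℕ) :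
    Summable fun c : Bool × ℕ => ‖ξ ^ blockWeight j c‖ := by
  simpa only [norm_pow] using
    (hasSum_pow_blockWeight (ξ := ‖ξ‖) (by rwa [norm_norm]) j).summable

theorem hasSum_pow_codeWeight [CompleteSpace K] (hξ : ‖ξ‖ < 1) (n : ℕ) :
    HasSum (fun a : Fin n → Bool × ℕ => ξ ^ codeWeight n a)
      (ξ ^ (2 * n + 1) * ∏ j ∈ range n, (1 + ξ ^ (2 * j + 2)) / (1 - ξ ^ (2 * j + 1))) := by
  have hf := summable_norm_pow_blockWeight hξ
  have hpi := (summable_norm_pi_prod _ fun j : Fin n => hf j).of_norm.hasSum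
  rw [tsum_pi_prod _ fun j : Fin n => hf j] at hpi
  rw [← Fin.prod_univ_eq_prod_range (fun j => (1 + ξ ^ (2 * j + 2)) / (1 - ξ ^ (2 * j + 1)))]
  simp only [← (hasSum_pow_blockWeight hξ _).tsum_eq]
  simpa only [codeWeight, pow_add, prod_pow_eq_pow_sum] using hpi.mul_left (ξ ^ (2 * n + 1))

end Weights

section RealBound

variable {x : ℝ}

theorem one_add_pow_div_one_sub_pow_le (hx₀ : 0 ≤ x) (hx₁ : x < 1) (j : ℕ) :
    (1 + x ^ (2 * j + 2)) / (1 - x ^ (2 * j + 1)) ≤ 1 + 2 * x ^ j / (1 - x) := by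
  have hxj : x ^ (2 * j + 1) ≤ x ^ j := pow_le_pow_of_le_one hx₀ hx₁.le (by omega)
  have hx1 : x ^ (2 * j + 1) ≤ x := pow_le_of_le_one hx₀ hx₁.le (by omega)
  have hx2 : x ^ (2 * j + 2) ≤ x ^ (2 * j + 1) := pow_le_pow_of_le_one hx₀ hx₁.le (by omega)
  have hxj0 : 0 ≤ x ^ j := pow_nonneg hx₀ j
  rw [div_le_iff₀ (by linarith), ← sub_nonneg]
  have : 2 * x ^ j / (1 - x) * (1 - x ^ (2 * j + 1)) ≥ 2 * x ^ j := by
    rw [div_mul_eq_mul_div, ge_iff_le, le_div_iff₀ (by linarith)]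
    nlinarith
  nlinarith

theorem prod_one_add_pow_div_one_sub_pow_le (hx₀ : 0 ≤ x) (hx₁ : x < 1) (n : ℕ) :
    ∏ j ∈ range n, (1 + x ^ (2 * j + 2)) / (1 - x ^ (2 * j + 1)) ≤
      Real.exp (2 / (1 - x) ^ 2) := by
  have hx : 0 < 1 - x := by linarith
  calc ∏ j ∈ range n, (1 + x ^ (2 * j + 2)) / (1 - x ^ (2 * j + 1))
      ≤ ∏ j ∈ range n, (1 + 2 * x ^ j / (1 - x)) := by
        refine prod_le_prod (fun j _ => div_nonneg (by positivity) ?_)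
          fun j _ => one_add_pow_div_one_sub_pow_le hx₀ hx₁ j
        linarith [pow_le_of_le_one hx₀ hx₁.le (show 2 * j + 1 ≠ 0 by omega)]
    _ ≤ Real.exp (∑ j ∈ range n, 2 * x ^ j / (1 - x)) :=
        Real.prod_one_add_le_exp_sum _ fun j => by positivity
    _ ≤ Real.exp (2 / (1 - x) ^ 2) := by
        gcongr
        have := geom_sum_Ico_le_of_lt_one (m := 0) (n := n) hx₀ hx₁
        rw [← range_eq_Ico, pow_zero] at this
        rw [← sum_div, ← mul_sum, sq, ← div_div]
        gcongr
        rw [← mul_one_div]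
        gcongr

theorem summable_pow_codeWeight (hx₀ : 0 ≤ x) (hx₁ : x < 1) :
    Summable fun t : Σ n, Fin n → Bool × ℕ => x ^ codeWeight t.1 t.2 := by
  have hx : ‖x‖ < 1 := by rwa [Real.norm_of_nonneg hx₀]
  refine (summable_sigma_of_nonneg fun _ => pow_nonneg hx₀ _).mpr
    ⟨fun n => (hasSum_pow_codeWeight hx n).summable, ?_⟩
  refine .of_nonneg_of_le (fun n => tsum_nonneg fun _ => pow_nonneg hx₀ _) (fun n => ?_)
    (((summable_geometric_of_lt_one (sq_nonneg x) (by nlinarith)).mul_left x).mul_left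
      (Real.exp (2 / (1 - x) ^ 2)))
  rw [(hasSum_pow_codeWeight hx n).tsum_eq, mul_comm, pow_succ, pow_mul, mul_comm x]
  exact mul_le_mul_of_nonneg_right (prod_one_add_pow_div_one_sub_pow_le hx₀ hx₁ n)
    (by positivity)

end RealBound

def blockParts (j : ℕ) (c : Bool × ℕ) : Multiset ℕ :=
  (if c.1 then {2 * j + 2} else 0) + Multiset.replicate c.2 (2 * j + 1)

def codeParts (n : ℕ) (a : Fin n → Bool × ℕ) : Multiset ℕ :=
  (2 * n + 1) ::ₘ ∑ j : Fin n, blockParts j (a j)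

section Parts

variable {n j v : ℕ} {c : Bool × ℕ} {a : Fin n → Bool × ℕ}

theorem sum_blockParts : (blockParts j c).sum = blockWeight j c := by
  rcases c with ⟨_ | _, m⟩ <;> simp [blockParts, blockWeight]

theorem sum_codeParts : (codeParts n a).sum = codeWeight n a := by
  simp [codeParts, codeWeight, Multiset.sum_sum, sum_blockParts]

theorem mem_blockParts (h : v ∈ blockParts j c) : v = 2 * j + 1 ∨ v = 2 * j + 2 := by
  rcases Multiset.mem_add.mp h with h | h
  · split_ifs at h
    · exact Or.inr (Multiset.mem_singleton.mp h)
    · exact absurd h (Multiset.notMem_zero v)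
  · exact Or.inl (Multiset.eq_of_mem_replicate h)

theorem self_mem_codeParts (n : ℕ) (a : Fin n → Bool × ℕ) : 2 * n + 1 ∈ codeParts n a :=
  Multiset.mem_cons_self _ _

theorem mem_codeParts (h : v ∈ codeParts n a) : 0 < v ∧ v ≤ 2 * n + 1 := by
  rcases Multiset.mem_cons.mp h with rfl | h
  · omega
  · obtain ⟨i, -, hi⟩ := Multiset.mem_sum.mp h
    have := i.isLt
    rcases mem_blockParts hi with rfl | rfl <;> omega

theorem count_blockParts_even : (blockParts j c).count (2 * j + 2) = if c.1 then 1 else 0 := by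
  rcases c with ⟨_ | _, m⟩ <;> simp [blockParts, Multiset.count_replicate]

theorem count_blockParts_odd : (blockParts j c).count (2 * j + 1) = c.2 := by
  rcases c with ⟨_ | _, m⟩ <;> simp [blockParts]

theorem count_codeParts_top : (codeParts n a).count (2 * n + 1) = 1 := by
  rw [codeParts, Multiset.count_cons_self, add_eq_right, Multiset.count_eq_zero]
  intro h
  obtain ⟨i, -, hi⟩ := Multiset.mem_sum.mp h
  have := i.isLt
  rcases mem_blockParts hi with h | h <;> omega

theorem count_codeParts_of_block (i : Fin n) (hv : v = 2 * i + 1 ∨ v = 2 * i + 2) :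
    (codeParts n a).count v = (blockParts i (a i)).count v := by
  have hi := i.isLt
  rw [codeParts, Multiset.count_cons_of_ne (by omega), Multiset.count_sum',
    sum_eq_single i (fun k _ hk => ?_) (by simp)]
  refine Multiset.count_eq_zero.mpr fun h => hk (Fin.ext ?_)
  rcases mem_blockParts h with h | h <;> omega

theorem exists_block_of_pos_of_le (h₀ : 0 < v) (hv : v ≤ 2 * n) :
    ∃ i : Fin n, v = 2 * i + 1 ∨ v = 2 * i + 2 :=
  ⟨⟨(v - 1) / 2, by omega⟩, by simp only; omega⟩

theorem count_codeParts_of_even (hv : v ∈ codeParts n a) (he : Even v) :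
    (codeParts n a).count v = 1 := by
  obtain ⟨hv₀, hvn⟩ := mem_codeParts hv
  obtain ⟨i, hi⟩ := exists_block_of_pos_of_le hv₀ (show v ≤ 2 * n by rcases he with ⟨r, rfl⟩; omega)
  obtain rfl : v = 2 * i + 2 := by rcases he with ⟨r, rfl⟩; omega
  have hpos := Multiset.count_pos.mpr hv
  rw [count_codeParts_of_block i (.inr rfl), count_blockParts_even] at hpos ⊢
  split_ifs at hpos ⊢ <;> omega

end Parts

def IsDE3 {N : ℕ} (p : N.Partition) : Prop :=
  (∀ k ∈ p.parts, Even k → p.parts.count k = 1) ∧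
    ∃ k ∈ p.parts, Odd k ∧ p.parts.count k = 1 ∧ ∀ j ∈ p.parts, j ≤ k

def codePartition (n : ℕ) (a : Fin n → Bool × ℕ) : (codeWeight n a).Partition :=
  ⟨codeParts n a, fun h => (mem_codeParts h).1, sum_codeParts⟩

theorem isDE3_codePartition (n : ℕ) (a : Fin n → Bool × ℕ) : IsDE3 (codePartition n a) :=
  ⟨fun _ hk hke => count_codeParts_of_even hk hke, 2 * n + 1, self_mem_codeParts n a,
    odd_two_mul_add_one n, count_codeParts_top, fun _ hk => (mem_codeParts hk).2⟩

theorem codeParts_injective (n : ℕ) : Function.Injective (codeParts n) := by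
  intro a b h
  funext i
  have heven := congrArg (Multiset.count (2 * (i : ℕ) + 2)) h
  have hodd := congrArg (Multiset.count (2 * (i : ℕ) + 1)) h
  rw [count_codeParts_of_block i (.inr rfl), count_codeParts_of_block i (.inr rfl),
    count_blockParts_even, count_blockParts_even] at heven
  rw [count_codeParts_of_block i (.inl rfl), count_codeParts_of_block i (.inl rfl),
    count_blockParts_odd, count_blockParts_odd] at hodd
  refine Prod.ext ?_ hodd
  revert heven
  cases (a i).1 <;> cases (b i).1 <;> simp

theorem codeParts_sigma_injective :
    Function.Injective fun t : Σ n, Fin n → Bool × ℕ => codeParts t.1 t.2 := by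
  rintro ⟨n, a⟩ ⟨m, b⟩ (h : codeParts n a = codeParts m b)
  have hnm := (mem_codeParts (h ▸ self_mem_codeParts n a)).2
  have hmn := (mem_codeParts (h.symm ▸ self_mem_codeParts m b)).2
  obtain rfl : n = m := by omega
  rw [codeParts_injective n h]

theorem exists_codeParts_eq {N : ℕ} {p : N.Partition} (hp : IsDE3 p) :
    ∃ n a, codeParts n a = p.parts := by
  obtain ⟨heven, k, -, ⟨n, rfl⟩, htop, hmax⟩ := hp
  refine ⟨n, fun i => (decide (2 * (i : ℕ) + 2 ∈ p.parts), p.parts.count (2 * (i : ℕ) + 1)),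
    Multiset.ext.mpr fun v => ?_⟩
  rcases lt_trichotomy v (2 * n + 1) with hv | rfl | hv
  · rcases Nat.eq_zero_or_pos v with rfl | h₀
    · rw [Multiset.count_eq_zero_of_notMem fun h => (mem_codeParts h).1.false,
        Multiset.count_eq_zero_of_notMem fun h => (p.parts_pos h).false]
    obtain ⟨i, rfl | rfl⟩ := exists_block_of_pos_of_le h₀ (show v ≤ 2 * n by omega)
    · rw [count_codeParts_of_block i (.inl rfl), count_blockParts_odd]
    · rw [count_codeParts_of_block i (.inr rfl), count_blockParts_even]
      by_cases hmem : 2 * (i : ℕ) + 2 ∈ p.parts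
      · simp [hmem, heven _ hmem ⟨i + 1, by ring⟩]
      · simp [hmem, Multiset.count_eq_zero_of_notMem]
  · rw [count_codeParts_top, htop]
  · rw [Multiset.count_eq_zero_of_notMem fun h => by have := (mem_codeParts h).2; omega,
      Multiset.count_eq_zero_of_notMem fun h => by have := hmax v h; omega]

def codeToDE3 (t : Σ n, Fin n → Bool × ℕ) : Σ N : ℕ, {p : N.Partition // IsDE3 p} :=
  ⟨codeWeight t.1 t.2, codePartition t.1 t.2, isDE3_codePartition t.1 t.2⟩

theorem codeToDE3_bijective : Function.Bijective codeToDE3 := by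
  refine ⟨fun _ _ h => codeParts_sigma_injective (congrArg (fun s => s.2.1.parts) h), ?_⟩
  rintro ⟨N, p, hp⟩
  obtain ⟨n, a, h⟩ := exists_codeParts_eq hp
  obtain rfl : codeWeight n a = N := by rw [← sum_codeParts, h, p.parts_sum]
  exact ⟨⟨n, a⟩, Sigma.ext rfl (heq_of_eq (Subtype.ext (Nat.Partition.ext h)))⟩

noncomputable def codeEquiv : (Σ n, Fin n → Bool × ℕ) ≃ Σ N : ℕ, {p : N.Partition // IsDE3 p} :=
  .ofBijective codeToDE3 codeToDE3_bijective

theorem codeEquiv_fst (t : Σ n, Fin n → Bool × ℕ) : (codeEquiv t).1 = codeWeight t.1 t.2 :=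
  rfl

theorem DE3_eq_card (N : ℕ) : DE3 N = Nat.card {p : N.Partition // IsDE3 p} :=
  rfl

theorem hasSum_DE3_mul_pow {K : Type*} [NormedRing K] {ξ s : K}
    (h : HasSum (fun t : Σ n, Fin n → Bool × ℕ => ξ ^ codeWeight t.1 t.2) s) :
    HasSum (fun N => (DE3 N : K) * ξ ^ N) s := by
  have h' : HasSum (fun s : Σ N : ℕ, {p : N.Partition // IsDE3 p} => ξ ^ s.1) s :=
    codeEquiv.hasSum_iff.mp (by simpa only [Function.comp_def, codeEquiv_fst] using h)
  refine h'.sigma fun N => ?_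
  have hfiber :=
    (Summable.of_finite : Summable fun _ : {p : N.Partition // IsDE3 p} => ξ ^ N).hasSum
  rwa [tsum_const, nsmul_eq_mul, ← DE3_eq_card] at hfiber

theorem qPoch_mul_pow_div_qPoch (q : ℂ) (n : ℕ) :
    qPoch (-q ^ 2) (q ^ 2) n * q ^ (2 * n + 1) / qPoch q (q ^ 2) n =
      q ^ (2 * n + 1) * ∏ j ∈ range n, (1 + q ^ (2 * j + 2)) / (1 - q ^ (2 * j + 1)) := by
  have hnum : qPoch (-q ^ 2) (q ^ 2) n = ∏ j ∈ range n, (1 + q ^ (2 * j + 2)) :=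
    prod_congr rfl fun j _ => by ring
  have hden : qPoch q (q ^ 2) n = ∏ j ∈ range n, (1 - q ^ (2 * j + 1)) :=
    prod_congr rfl fun j _ => by ring
  rw [hnum, hden, prod_div_distrib]
  ring

theorem stmt_12 (q : ℂ) (hq : ‖q‖ < 1) :
    ∑' n : ℕ, (DE3 n : ℂ) * q ^ n =
      ∑' n : ℕ, qPoch (-q ^ 2) (q ^ 2) n * q ^ (2 * n + 1) / qPoch q (q ^ 2) n := by
  have hcode := ((summable_pow_codeWeight (norm_nonneg q) hq).of_norm_bounded
    fun t => (norm_pow q _).le).hasSum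
  refine (hasSum_DE3_mul_pow hcode).tsum_eq.trans (hcode.sigma fun n => ?_).tsum_eq.symm
  rw [qPoch_mul_pow_div_qPoch]
  exact hasSum_pow_codeWeight hq n
end
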